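/- Pressure equals the logarithm of the maximal eigenvalue: Let f:Ω→ℝ be α-Hölder, 0<α<1, and suppose λ_f>0, a strictly positive continuous function h_f, and a Borel probability measure ν_f satisfy L_f h_f = λ_f h_f and ∫_Ω (L_f φ) dν_f = λ_f ∫_Ω φ dν_f for every continuous φ. Then for every x∈Ω, lim_{n→∞} (1/n) log[(L_f^n 𝟙)(x)] = log λ_f, where 𝟙 denotes the constant function 1. -/

import Mathlib

open MeasureTheory Filter Topology

noncomputable def dOmega {M : Type*} [MetricSpace M] (x y : ℕ → M) : ℝ :=
  ∑' n : ℕ, (1 / 2 : ℝ) ^ (n + 1) * dist (x n) (y n)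

/-- The sequence `(a, x₁, x₂, …)` obtained by prepending `a` to `x`. -/
def consSeq {M : Type*} (a : M) (x : ℕ → M) : ℕ → M := fun n => Nat.casesOn n a x

/-- The left shift `σ(x₁,x₂,…) = (x₂,x₃,…)`. -/
def shift {M : Type*} (x : ℕ → M) : ℕ → M := fun n => x (n + 1)

/-- The Ruelle transfer operator with a priori measure `μ` and potential `f`. -/
noncomputable def Ruelle {M : Type*} [MeasurableSpace M] (μ : Measure M)
    (f φ : (ℕ → M) → ℝ) : (ℕ → M) → ℝ :=
  fun x => ∫ a, Real.exp (f (consSeq a x)) * φ (consSeq a x) ∂μ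

/-- The `n`-th Birkhoff sum `S_n φ = Σ_{j=0}^{n-1} φ ∘ σ^j`. -/
noncomputable def birkhoff {M : Type*} (φ : (ℕ → M) → ℝ) (n : ℕ) : (ℕ → M) → ℝ :=
  fun x => ∑ j ∈ Finset.range n, φ (shift^[j] x)

/-- `f` is `α`-Hölder with respect to the metric `dOmega`. -/
def IsHolder {M : Type*} [MetricSpace M] (α : ℝ) (f : (ℕ → M) → ℝ) : Prop :=
  ∃ C : ℝ, 0 ≤ C ∧ ∀ x y, |f x - f y| ≤ C * dOmega x y ^ α

/-! A Hölder potential is continuous, so `L_f` is a positive linear operator on continuous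
functions. If `m ≤ h_f ≤ K` with `m > 0`, then `h_f / K ≤ 𝟙 ≤ h_f / m`, and applying `L_f^n`
together with `L_f h_f = λ_f h_f` gives `λ_f^n h_f / K ≤ L_f^n 𝟙 ≤ λ_f^n h_f / m`; the
constants disappear after taking `(1/n) log`. -/

lemma tendsto_inv_mul_log_of_le_of_le {u : ℕ → ℝ} {r a b : ℝ} (hr : 0 < r) (ha : 0 < a)
    (hb : 0 < b) (hlow : ∀ n, r ^ n * a ≤ u n) (hupp : ∀ n, u n ≤ r ^ n * b) :
    Tendsto (fun n : ℕ => (n : ℝ)⁻¹ * Real.log (u n)) atTop (𝓝 (Real.log r)) := by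
  have hpow : ∀ c, 0 < c →
      Tendsto (fun n : ℕ => (n : ℝ)⁻¹ * Real.log (r ^ n * c)) atTop (𝓝 (Real.log r)) := by
    intro c hc
    have hlim : Tendsto (fun n : ℕ => (n : ℝ)⁻¹ * Real.log c + Real.log r) atTop
        (𝓝 (Real.log r)) := by
      simpa using (tendsto_inv_atTop_nhds_zero_nat.mul_const (Real.log c)).add_const (Real.log r)
    refine hlim.congr' ?_
    filter_upwards [eventually_ne_atTop 0] with n hn
    rw [Real.log_mul (pow_pos hr n).ne' hc.ne', Real.log_pow]
    field_simp
    ring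
  have hu : ∀ n, 0 < u n := fun n => (mul_pos (pow_pos hr n) ha).trans_le (hlow n)
  refine tendsto_of_tendsto_of_tendsto_of_le_of_le (hpow a ha) (hpow b hb) (fun n => ?_) fun n => ?_
  · exact mul_le_mul_of_nonneg_left (Real.log_le_log (by positivity) (hlow n)) (by positivity)
  · exact mul_le_mul_of_nonneg_left (Real.log_le_log (hu n) (hupp n)) (by positivity)

section Holder

variable {M : Type*} [MetricSpace M] [BoundedSpace M]

lemma continuous_dOmega (x : ℕ → M) : Continuous fun y => dOmega x y := by
  set D := Metric.diam (Set.univ : Set M)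
  have hD : ∀ p q : M, dist p q ≤ D := fun p q =>
    Metric.dist_le_diam_of_mem (Bornology.IsBounded.all _) trivial trivial
  refine continuous_tsum (u := fun n => (1 / 2 : ℝ) ^ (n + 1) * D)
    (fun n => continuous_const.mul (continuous_const.dist (continuous_apply n))) ?_ fun n y => ?_
  · exact ((summable_geometric_two.mul_left (1 / 2)).congr fun n => by ring).mul_right D
  · rw [Real.norm_eq_abs, abs_of_nonneg (by positivity)]
    exact mul_le_mul_of_nonneg_left (hD _ _) (by positivity)

lemma IsHolder.continuous {α : ℝ} (hα : 0 < α) {f : (ℕ → M) → ℝ} (hf : IsHolder α f) :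
    Continuous f := by
  obtain ⟨C, -, hC⟩ := hf
  refine continuous_iff_continuousAt.2 fun x => tendsto_iff_dist_tendsto_zero.2 ?_
  have hd : Tendsto (fun y => dOmega x y) (𝓝 x) (𝓝 0) := by
    simpa [ContinuousAt, dOmega] using (continuous_dOmega x).continuousAt (x := x)
  have hbound : Tendsto (fun y => C * dOmega x y ^ α) (𝓝 x) (𝓝 0) := by
    simpa [Real.zero_rpow hα.ne'] using
      ((Real.continuousAt_rpow_const 0 α (Or.inr hα.le)).tendsto.comp hd).const_mul C
  refine squeeze_zero (fun _ => dist_nonneg) (fun y => ?_) hbound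
  rw [dist_comm, Real.dist_eq]
  exact hC x y

end Holder

lemma continuous_consSeq_uncurry {M : Type*} [TopologicalSpace M] :
    Continuous fun p : (ℕ → M) × M => consSeq p.2 p.1 :=
  continuous_pi fun n => by
    cases n with
    | zero => exact continuous_snd
    | succ n => exact (continuous_apply n).comp continuous_fst

section Ruelle

variable {M : Type*} [MeasurableSpace M] (μ : Measure M)

lemma ruelle_const_mul (f φ : (ℕ → M) → ℝ) (c : ℝ) :
    Ruelle μ f (fun y => c * φ y) = fun x => c * Ruelle μ f φ x := by
  ext x
  simp only [Ruelle, ← integral_const_mul]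
  congr 1
  ext a
  ring

lemma iterate_ruelle_const_mul_of_eigen {f h : (ℕ → M) → ℝ} {lam : ℝ}
    (heig : Ruelle μ f h = fun x => lam * h x) (c : ℝ) (n : ℕ) :
    (Ruelle μ f)^[n] (fun y => c * h y) = fun x => lam ^ n * (c * h x) := by
  induction n with
  | zero => simp
  | succ n ih =>
    rw [Function.iterate_succ_apply', ih, ruelle_const_mul, ruelle_const_mul, heig]
    ext x
    ring

variable [MetricSpace M] [CompactSpace M] [OpensMeasurableSpace M] [IsFiniteMeasure μ]
  {f : (ℕ → M) → ℝ}

lemma continuous_ruelle (hf : Continuous f) {φ : (ℕ → M) → ℝ} (hφ : Continuous φ) :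
    Continuous (Ruelle μ f φ) := by
  have hcons := continuous_consSeq_uncurry (M := M)
  have := continuous_parametric_integral_of_continuous (μ := μ)
    (f := fun x a => Real.exp (f (consSeq a x)) * φ (consSeq a x))
    ((Real.continuous_exp.comp (hf.comp hcons)).mul (hφ.comp hcons)) isCompact_univ
  rwa [Measure.restrict_univ] at this

lemma continuous_iterate_ruelle (hf : Continuous f) {φ : (ℕ → M) → ℝ} (hφ : Continuous φ)
    (n : ℕ) : Continuous ((Ruelle μ f)^[n] φ) := by
  induction n with
  | zero => exact hφ
  | succ n ih =>
    rw [Function.iterate_succ_apply']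
    exact continuous_ruelle μ hf ih

lemma ruelle_mono (hf : Continuous f) {φ ψ : (ℕ → M) → ℝ} (hφ : Continuous φ)
    (hψ : Continuous ψ) (hle : φ ≤ ψ) : Ruelle μ f φ ≤ Ruelle μ f ψ := by
  intro x
  have hcons : Continuous fun a : M => consSeq a x :=
    continuous_consSeq_uncurry.comp (continuous_const.prodMk continuous_id)
  have hint : ∀ {g : (ℕ → M) → ℝ}, Continuous g →
      Integrable (fun a => Real.exp (f (consSeq a x)) * g (consSeq a x)) μ := fun hg =>
    ((Real.continuous_exp.comp (hf.comp hcons)).mul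
      (hg.comp hcons)).integrable_of_hasCompactSupport (HasCompactSupport.of_compactSpace _)
  exact integral_mono (hint hφ) (hint hψ) fun a =>
    mul_le_mul_of_nonneg_left (hle _) (Real.exp_pos _).le

lemma iterate_ruelle_mono (hf : Continuous f) {φ ψ : (ℕ → M) → ℝ} (hφ : Continuous φ)
    (hψ : Continuous ψ) (hle : φ ≤ ψ) (n : ℕ) : (Ruelle μ f)^[n] φ ≤ (Ruelle μ f)^[n] ψ := by
  induction n with
  | zero => exact hle
  | succ n ih =>
    simp only [Function.iterate_succ_apply']
    exact ruelle_mono μ hf (continuous_iterate_ruelle μ hf hφ n)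
      (continuous_iterate_ruelle μ hf hψ n) ih

variable {h : (ℕ → M) → ℝ} {lam : ℝ}

lemma le_iterate_ruelle_one (hf : Continuous f) (hh : Continuous h)
    (heig : Ruelle μ f h = fun x => lam * h x) {K : ℝ} (hK : 0 < K) (hhK : ∀ y, h y ≤ K)
    (n : ℕ) (x : ℕ → M) : lam ^ n * (K⁻¹ * h x) ≤ (Ruelle μ f)^[n] 1 x := by
  have hle : (fun y => K⁻¹ * h y) ≤ 1 := fun y => (inv_mul_le_one₀ hK).2 (hhK y)
  simpa only [iterate_ruelle_const_mul_of_eigen μ heig] using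
    iterate_ruelle_mono μ hf (φ := fun y => K⁻¹ * h y) (continuous_const.mul hh) continuous_one
      hle n x

lemma iterate_ruelle_one_le (hf : Continuous f) (hh : Continuous h)
    (heig : Ruelle μ f h = fun x => lam * h x) {m : ℝ} (hm : 0 < m) (hmh : ∀ y, m ≤ h y)
    (n : ℕ) (x : ℕ → M) : (Ruelle μ f)^[n] 1 x ≤ lam ^ n * (m⁻¹ * h x) := by
  have hle : (1 : (ℕ → M) → ℝ) ≤ fun y => m⁻¹ * h y := fun y =>
    (one_le_inv_mul₀ hm).2 (hmh y)
  simpa only [iterate_ruelle_const_mul_of_eigen μ heig] using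
    iterate_ruelle_mono μ hf (ψ := fun y => m⁻¹ * h y) continuous_one (continuous_const.mul hh)
      hle n x

end Ruelle

theorem pressure_eq_log_eigenvalue_general
    {M : Type*} [MetricSpace M] [CompactSpace M] [MeasurableSpace M] [BorelSpace M]
    (μ : Measure M) [IsProbabilityMeasure μ]
    (α : ℝ) (hα0 : 0 < α)
    (f : (ℕ → M) → ℝ) (hf : IsHolder α f)
    (lam : ℝ) (hlam : 0 < lam)
    (h : (ℕ → M) → ℝ) (hhc : Continuous h) (hhpos : ∀ x, 0 < h x)
    (heig : Ruelle μ f h = fun x => lam * h x) :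
    ∀ x : ℕ → M,
      Tendsto (fun n : ℕ => (n : ℝ)⁻¹ * Real.log ((Ruelle μ f)^[n] 1 x))
        atTop (nhds (Real.log lam)) := by
  intro x
  have hfc := hf.continuous hα0
  obtain ⟨z, -, hz⟩ := isCompact_univ.exists_isMinOn ⟨x, trivial⟩ hhc.continuousOn
  obtain ⟨w, -, hw⟩ := isCompact_univ.exists_isMaxOn ⟨x, trivial⟩ hhc.continuousOn
  have hx := hhpos x
  have hzpos := hhpos z
  have hwpos := hhpos w
  exact tendsto_inv_mul_log_of_le_of_le hlam (by positivity) (by positivity)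
    (le_iterate_ruelle_one μ hfc hhc heig hwpos (fun y => isMaxOn_iff.1 hw y trivial) · x)
    (iterate_ruelle_one_le μ hfc hhc heig hzpos (fun y => isMinOn_iff.1 hz y trivial) · x)

/-- Pressure equals the logarithm of the maximal eigenvalue. -/
theorem pressure_eq_log_eigenvalue
    {M : Type*} [MetricSpace M] [CompactSpace M] [MeasurableSpace M] [BorelSpace M]
    (μ : Measure M) [IsProbabilityMeasure μ]
    (hfull : ∀ U : Set M, IsOpen U → U.Nonempty → 0 < μ U)
    (α : ℝ) (hα0 : 0 < α) (hα1 : α < 1)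
    (f : (ℕ → M) → ℝ) (hf : IsHolder α f)
    (lam : ℝ) (hlam : 0 < lam)
    (h : (ℕ → M) → ℝ) (hhc : Continuous h) (hhpos : ∀ x, 0 < h x)
    (ν : Measure (ℕ → M)) [IsProbabilityMeasure ν]
    (heig : Ruelle μ f h = fun x => lam * h x)
    (heig' : ∀ φ : (ℕ → M) → ℝ, Continuous φ →
      ∫ x, Ruelle μ f φ x ∂ν = lam * ∫ x, φ x ∂ν) :
    ∀ x : ℕ → M,
      Tendsto (fun n : ℕ => (n : ℝ)⁻¹ * Real.log ((Ruelle μ f)^[n] 1 x))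
        atTop (nhds (Real.log lam)) :=
  pressure_eq_log_eigenvalue_general μ α hα0 f hf lam hlam h hhc hhpos heig
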